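/- (Theorem 3.2, second part) Let L be a non-metabelian graded Lie algebra of maximal class over a field F of odd prime characteristic p, with setup elements x, y, first constituent length ℓ = 2q (q a power of p), and second constituent length ℓ_2 as in the recursive definition. Then ℓ_2 = q. -/

import Mathlib

/-!
Write `u j = [y x^j]`, so `u j` commutes with `y` for `j < 2q - 1`, `u (2q) = 0`, and
`[v_1 y] = [u (2q-1), y]`. Since `q` is a power of the characteristic, `(ad x)^q` is again a
derivation. Applying it to `[u j, y]` and inducting on `k` gives
`[u (q-1), u (q+k)] = -[v_1 y x^k]` for `k < q`, and `[u j, u (q+k)] = 0` for larger `j`;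
by Jacobi, `[v_1 y x^k y] = 0` for `k < q - 1`. Applying `(ad x)^q` to `[u (q-1), u q]` gives
`2 [v_1 y x^q] = 0`, so `[v_1 y x^q] = 0` as `p` is odd. Hence `q - 1` is the first `k` with
`[v_1 y x^k y] ≠ 0`.
-/

/-- Left-normed bracket of `a` with `n` copies of `b`:
`lnb a b n = [a b … b]` with `n` occurrences of `b`. -/
def lnb {L : Type*} [LieRing L] (a b : L) : ℕ → L
  | 0 => a
  | n + 1 => ⁅lnb a b n, b⁆

/-- `Lc` is a grading of `L` (indexed by `ℕ`, with trivial component in degree `0`)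
making `L` an (infinite-dimensional) graded Lie algebra of maximal class:
`L` is the internal direct sum of the `Lc i`, `⁅Lc i, Lc j⁆ ⊆ Lc (i+j)`,
`dim (Lc 1) = 2`, `dim (Lc i) = 1` for `i ≥ 2`, and
`Lc (i+1) = span {⁅u, w⁆ : u ∈ Lc i, w ∈ Lc 1}` for `i ≥ 1`. -/
structure IsMaxClassGrading (F : Type*) [Field F] (L : Type*) [LieRing L] [LieAlgebra F L]
    (Lc : ℕ → Submodule F L) : Prop where
  zero : Lc 0 = ⊥
  internal : DirectSum.IsInternal Lc
  bracket_mem : ∀ i j : ℕ, ∀ u ∈ Lc i, ∀ w ∈ Lc j, ⁅u, w⁆ ∈ Lc (i + j)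
  dim_one : Module.finrank F (Lc 1) = 2
  dim_rest : ∀ i : ℕ, 2 ≤ i → Module.finrank F (Lc i) = 1
  gen : ∀ i : ℕ, 1 ≤ i →
    Lc (i + 1) = Submodule.span F {z | ∃ u ∈ Lc i, ∃ w ∈ Lc 1, z = ⁅u, w⁆}

/-- The standard setup for a non-metabelian graded Lie algebra of maximal class:
`y ∈ L_1` is nonzero and centralizes `L_2`, `x ∈ L_1` is not a scalar multiple of `y`,
the first constituent length `ℓ` is positive with `[y x^i y] = 0` for `0 ≤ i < ℓ−1` and
`[y x^{ℓ−1} y] ≠ 0`, and `x` is normalized so that `[y x^ℓ] = 0`. -/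
structure MaxClassSetup {F : Type*} [Field F] {L : Type*} [LieRing L] [LieAlgebra F L]
    (Lc : ℕ → Submodule F L) (x y : L) (ℓ : ℕ) : Prop where
  y_mem : y ∈ Lc 1
  y_ne : y ≠ 0
  y_central : ∀ u ∈ Lc 2, ⁅u, y⁆ = 0
  x_mem : x ∈ Lc 1
  x_not_mul : ∀ c : F, x ≠ c • y
  ell_pos : 0 < ℓ
  first_const : ∀ i : ℕ, i < ℓ - 1 → ⁅lnb y x i, y⁆ = 0
  first_const_ne : ⁅lnb y x (ℓ - 1), y⁆ ≠ 0
  normalized : lnb y x ℓ = 0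

/-- The sequences `(ℓ_r)_{r≥1}` of constituent lengths and `(v_r)_{r≥1}` of
distinguished homogeneous elements: `ℓ_1 = ℓ`, `v_1 = [y x^{ℓ−1}]`, and for `r ≥ 2`,
`ℓ_r > 0`, `[v_{r−1} y x^i y] = 0` for `0 ≤ i < ℓ_r − 1`,
`v_r = [v_{r−1} y x^{ℓ_r − 1}]`, and `[v_r y] ≠ 0`. -/
structure ConstituentSeq {F : Type*} [Field F] {L : Type*} [LieRing L] [LieAlgebra F L]
    (x y : L) (ℓ : ℕ) (l : ℕ → ℕ) (v : ℕ → L) : Prop where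
  l_one : l 1 = ℓ
  v_one : v 1 = lnb y x (ℓ - 1)
  l_pos : ∀ r : ℕ, 2 ≤ r → 0 < l r
  const : ∀ r : ℕ, 2 ≤ r → ∀ i : ℕ, i < l r - 1 → ⁅lnb ⁅v (r - 1), y⁆ x i, y⁆ = 0
  v_def : ∀ r : ℕ, 2 ≤ r → v r = lnb ⁅v (r - 1), y⁆ x (l r - 1)
  const_end : ∀ r : ℕ, 2 ≤ r → ⁅v r, y⁆ ≠ 0

section LeftNormed

variable {L : Type*} [LieRing L]

theorem lnb_zero (a b : L) : lnb a b 0 = a := rfl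

theorem lnb_succ (a b : L) (n : ℕ) : lnb a b (n + 1) = ⁅lnb a b n, b⁆ := rfl

theorem lnb_add (a b : L) (m n : ℕ) : lnb a b (m + n) = lnb (lnb a b m) b n := by
  induction n with
  | zero => rfl
  | succ n ih => rw [← Nat.add_assoc, lnb_succ, ih, lnb_succ]

theorem zero_lnb (b : L) (n : ℕ) : lnb (0 : L) b n = 0 := by
  induction n with
  | zero => rfl
  | succ n ih => rw [lnb_succ, ih, zero_lie]

theorem lnb_neg (a b : L) (n : ℕ) : lnb (-a) b n = -lnb a b n := by
  induction n with
  | zero => rfl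
  | succ n ih => rw [lnb_succ, ih, neg_lie, lnb_succ]

theorem lnb_eq_zero_of_le {a b : L} {m n : ℕ} (ha : lnb a b m = 0) (hmn : m ≤ n) :
    lnb a b n = 0 := by
  obtain ⟨k, rfl⟩ := Nat.exists_eq_add_of_le hmn
  rw [lnb_add, ha, zero_lnb]

theorem lie_lie_right (u v x : L) : ⁅u, ⁅v, x⁆⁆ = ⁅⁅u, v⁆, x⁆ - ⁅⁅u, x⁆, v⁆ := by
  rw [leibniz_lie, sub_eq_add_neg, lie_skew]

theorem lnb_eq_iterate_inner (R : Type*) [CommRing R] [LieAlgebra R L] (a b : L) (n : ℕ) :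
    lnb a b n = (LieDerivation.inner R L L b)^[n] a := by
  induction n with
  | zero => rfl
  | succ n ih => rw [lnb_succ, ih, Function.iterate_succ_apply', LieDerivation.inner_apply_apply]

end LeftNormed

theorem lnb_lie_pow_char (R : Type*) {L : Type*} [CommRing R] [LieRing L] [LieAlgebra R L]
    {p : ℕ} (hp : p.Prime) [CharP R p] (x u z : L) (m : ℕ) :
    lnb ⁅u, z⁆ x (p ^ m) = ⁅lnb u x (p ^ m), z⁆ + ⁅u, lnb z x (p ^ m)⁆ := by
  have hq : p ^ m ≠ 0 := pow_ne_zero m hp.ne_zero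
  simp only [lnb_eq_iterate_inner R]
  rw [LieDerivation.iterate_apply_lie', Finset.sum_eq_add_of_mem (p ^ m) 0 (by simp) (by simp) hq]
  · simp
  · intro i hi hi'
    obtain ⟨c, hc⟩ := hp.dvd_choose_pow hi'.2 hi'.1
    rw [hc, mul_comm, mul_nsmul, ← Nat.cast_smul_eq_nsmul R, CharP.cast_eq_zero R p, zero_smul]

section Constituent

variable {L : Type*} [LieRing L] {x y : L} {q : ℕ}

theorem lie_lnb_lnb_eq_zero (hq : 0 < q)
    (hder : ∀ u z : L, lnb ⁅u, z⁆ x q = ⁅lnb u x q, z⁆ + ⁅u, lnb z x q⁆)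
    (hy : ∀ j, j < 2 * q - 1 → ⁅lnb y x j, y⁆ = 0) (hnil : lnb y x (2 * q) = 0) {j k : ℕ}
    (hqj : q ≤ j) (hjk : j + k ≤ 2 * q - 2) : ⁅lnb y x j, lnb y x (q + k)⁆ = 0 := by
  induction k generalizing j with
  | zero =>
    have h := hder (lnb y x j) y
    rw [hy j (by omega), zero_lnb, ← lnb_add, lnb_eq_zero_of_le (n := j + q) hnil (by omega),
      zero_lie, zero_add] at h
    exact h.symm
  | succ k ih =>
    rw [← Nat.add_assoc, lnb_succ, lie_lie_right, ih hqj (by omega), ← lnb_succ,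
      ih (by omega) (by omega), zero_lie, sub_zero]

theorem lie_lnb_sub_one_lnb (hq : 0 < q)
    (hder : ∀ u z : L, lnb ⁅u, z⁆ x q = ⁅lnb u x q, z⁆ + ⁅u, lnb z x q⁆)
    (hy : ∀ j, j < 2 * q - 1 → ⁅lnb y x j, y⁆ = 0) (hnil : lnb y x (2 * q) = 0) (k : ℕ)
    (hk : k ≤ q - 1) :
    ⁅lnb y x (q - 1), lnb y x (q + k)⁆ = -lnb ⁅lnb y x (2 * q - 1), y⁆ x k := by
  induction k with
  | zero =>
    have h := hder (lnb y x (q - 1)) y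
    rw [hy (q - 1) (by omega), zero_lnb, ← lnb_add, show q - 1 + q = 2 * q - 1 by omega] at h
    rw [Nat.add_zero, eq_neg_iff_add_eq_zero, add_comm]
    exact h.symm
  | succ k ih =>
    rw [← Nat.add_assoc, lnb_succ, lie_lie_right, ih (by omega), ← lnb_succ, Nat.sub_add_cancel hq,
      lie_lnb_lnb_eq_zero hq hder hy hnil le_rfl (by omega), sub_zero, neg_lie, lnb_succ]

theorem lie_lnb_lie_lnb_sub_one_eq_zero (hq : 0 < q)
    (hder : ∀ u z : L, lnb ⁅u, z⁆ x q = ⁅lnb u x q, z⁆ + ⁅u, lnb z x q⁆)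
    (hy : ∀ j, j < 2 * q - 1 → ⁅lnb y x j, y⁆ = 0) (hnil : lnb y x (2 * q) = 0) (k : ℕ)
    (hk : k + 1 < q) :
    ⁅lnb ⁅lnb y x (2 * q - 1), y⁆ x k, y⁆ = 0 := by
  rw [← neg_neg (lnb _ x k), ← lie_lnb_sub_one_lnb hq hder hy hnil k (by omega), neg_lie,
    lie_lie, hy (q + k) (by omega), hy (q - 1) (by omega), lie_zero, lie_zero, sub_zero, neg_zero]

theorem two_nsmul_lnb_lie_lnb_sub_one_eq_zero (hq : 0 < q)
    (hder : ∀ u z : L, lnb ⁅u, z⁆ x q = ⁅lnb u x q, z⁆ + ⁅u, lnb z x q⁆)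
    (hy : ∀ j, j < 2 * q - 1 → ⁅lnb y x j, y⁆ = 0) (hnil : lnb y x (2 * q) = 0) :
    2 • lnb ⁅lnb y x (2 * q - 1), y⁆ x q = 0 := by
  have hw : lnb ⁅lnb y x (2 * q - 1), y⁆ x q = ⁅lnb y x (2 * q - 1), lnb y x q⁆ := by
    rw [hder, ← lnb_add, lnb_eq_zero_of_le (n := 2 * q - 1 + q) hnil (by omega), zero_lie,
      zero_add]
  have hw₀ := lie_lnb_sub_one_lnb hq hder hy hnil 0 (Nat.zero_le _)
  rw [Nat.add_zero, lnb_zero] at hw₀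
  have h := hder (lnb y x (q - 1)) (lnb y x q)
  rw [hw₀, lnb_neg, ← lnb_add y x (q - 1) q, ← lnb_add y x q q,
    lnb_eq_zero_of_le (n := q + q) hnil (by omega), lie_zero, add_zero,
    show q - 1 + q = 2 * q - 1 by omega, ← hw, neg_eq_iff_add_eq_zero] at h
  rw [two_nsmul, h]

end Constituent

theorem second_constituent_length_general {F : Type*} [Field F] {L : Type*} [LieRing L] [LieAlgebra F L]
    (p : ℕ) (hp : p.Prime) (hp2 : p ≠ 2) (hchar : CharP F p)
    (Lc : ℕ → Submodule F L)
    (x y : L) (ℓ q : ℕ) (hq : ∃ m : ℕ, q = p ^ m) (hℓq : ℓ = 2 * q)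
    (hsetup : MaxClassSetup Lc x y ℓ)
    (ℓ₂ : ℕ) (hℓ₂pos : 0 < ℓ₂)
    (h2 : ⁅lnb ⁅lnb y x (ℓ - 1), y⁆ x (ℓ₂ - 1), y⁆ ≠ 0) :
    ℓ₂ = q := by
  obtain ⟨m, rfl⟩ := hq
  subst hℓq
  have hq : 0 < p ^ m := pow_pos hp.pos m
  have hder (u z : L) := lnb_lie_pow_char F hp x u z m
  have hy := hsetup.first_const
  have hnil := hsetup.normalized
  rcases lt_trichotomy ℓ₂ (p ^ m) with hlt | heq | hgt
  · exact absurd (lie_lnb_lie_lnb_sub_one_eq_zero hq hder hy hnil (ℓ₂ - 1) (by omega)) h2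
  · exact heq
  · have hw := two_nsmul_lnb_lie_lnb_sub_one_eq_zero hq hder hy hnil
    rw [two_nsmul, ← two_smul F, smul_eq_zero] at hw
    have h2F : (2 : F) ≠ 0 := Ring.two_ne_zero (by rw [ringChar.eq F p]; exact hp2)
    rw [lnb_eq_zero_of_le (hw.resolve_left h2F) (by omega), zero_lie] at h2
    exact absurd rfl h2

/-- Theorem 3.2, second part: in odd characteristic `p`, if the first constituent
length is `ℓ = 2q` with `q` a power of `p`, then the second constituent has length `q`. -/
theorem second_constituent_length {F : Type*} [Field F] {L : Type*} [LieRing L] [LieAlgebra F L]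
    (p : ℕ) (hp : p.Prime) (hp2 : p ≠ 2) (hchar : CharP F p)
    (Lc : ℕ → Submodule F L) (hL : IsMaxClassGrading F L Lc)
    (x y : L) (ℓ q : ℕ) (hq : ∃ m : ℕ, q = p ^ m) (hℓq : ℓ = 2 * q)
    (hsetup : MaxClassSetup Lc x y ℓ)
    (ℓ₂ : ℕ) (hℓ₂pos : 0 < ℓ₂)
    (h1 : ∀ i : ℕ, i < ℓ₂ - 1 → ⁅lnb ⁅lnb y x (ℓ - 1), y⁆ x i, y⁆ = 0)
    (h2 : ⁅lnb ⁅lnb y x (ℓ - 1), y⁆ x (ℓ₂ - 1), y⁆ ≠ 0) :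
    ℓ₂ = q :=
  second_constituent_length_general p hp hp2 hchar Lc x y ℓ q hq hℓq hsetup ℓ₂ hℓ₂pos h2
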